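/- arXiv:2601.08038 — 3 statements merged into one kernel-verified Lean document; each statement's English description precedes it below -/
import Mathlib

section
/- For integers b ≥ 1, a, i, t, the identity (-1)^{b+1} · binom(t-2-a+i, b-1) = ∑_{j=0}^{b-1} (-1)^j · binom(a-i+b-1-j, b-1-j) · binom(t-1, j) holds. -/
/-- Generalized binomial coefficient `x(x-1)⋯(x-k+1)/k!` for integer `x` and
integer `k` (zero when `k < 0`). -/
def ibinom (x k : ℤ) : ℤ :=
  if k < 0 then 0
  else if 0 ≤ x then (x.toNat.choose k.toNat : ℤ)
  else (-1) ^ k.toNat * ((((-x) + k - 1).toNat.choose k.toNat : ℤ))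

/-!
Over ℤ, `ibinom x k` agrees with `Ring.choose x k` for `k ≥ 0`. Upper negation turns
`binom(a - i + b - 1 - j, b - 1 - j)` into `(-1)^(b-1-j) binom(i - a - 1, b - 1 - j)`, after which the
sum is the Chu–Vandermonde convolution for `binom(t - 1 + (i - a - 1), b - 1)`.
-/

open Finset

theorem ibinom_natCast_eq_choose (x : ℤ) (k : ℕ) : ibinom x k = Ring.choose x k := by
  rw [ibinom, if_neg (by omega), Int.toNat_natCast]
  split_ifs with hx
  · lift x to ℕ using hx
    rw [Ring.choose_natCast, Int.toNat_natCast]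
  · obtain ⟨m, rfl⟩ : ∃ m : ℕ, x = -m := ⟨(-x).toNat, by omega⟩
    obtain ⟨n, hn⟩ : ∃ n : ℕ, (m : ℤ) + k - 1 = n := ⟨(m + k - 1 : ℤ).toNat, by omega⟩
    rw [Ring.choose_neg, neg_neg, hn, Ring.choose_natCast, Int.toNat_natCast,
      Units.smul_def, Int.coe_negOnePow_natCast, smul_eq_mul]

namespace Ring

variable {R : Type*} [CommRing R] [BinomialRing R]

theorem choose_sub_sub_self (y : R) (k : ℕ) :
    choose ((k : R) - 1 - y) k = (-1) ^ k * choose y k := by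
  rw [show (k : R) - 1 - y = -(y - k + 1) by ring, choose_neg,
    show y - k + 1 + k - 1 = y by ring, Units.smul_def, Int.coe_negOnePow_natCast,
    zsmul_eq_mul, Int.cast_pow, Int.cast_neg, Int.cast_one]

theorem sum_range_neg_one_pow_mul_choose_mul_choose (r s : R) (m : ℕ) :
    ∑ j ∈ range (m + 1), (-1) ^ j * choose (((m - j : ℕ) : R) - 1 - s) (m - j) * choose r j =
      (-1) ^ m * choose (r + s) m := by
  rw [add_choose_eq m (Commute.all r s), mul_sum,
    Nat.sum_antidiagonal_eq_sum_range_succ (fun j l => (-1) ^ m * (choose r j * choose s l))]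
  refine sum_congr rfl fun j hj => ?_
  have hjm : j + (m - j) = m := by have := mem_range.mp hj; omega
  rw [choose_sub_sub_self, ← hjm, pow_add, Nat.add_sub_cancel_left]
  ring

end Ring

theorem stmt4 (a i t : ℤ) (b : ℕ) (hb : 1 ≤ b) :
    (-1 : ℤ) ^ (b + 1) * ibinom (t - 2 - a + i) ((b : ℤ) - 1) =
      ∑ j ∈ Finset.range b,
        (-1 : ℤ) ^ j * ibinom (a - i + b - 1 - j) ((b : ℤ) - 1 - j) *
          ibinom (t - 1) j := by
  obtain ⟨m, rfl⟩ : ∃ m, b = m + 1 := ⟨b - 1, by omega⟩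
  have hsummand : ∀ j ∈ range (m + 1),
      ibinom (a - i + ↑(m + 1) - 1 - j) (↑(m + 1) - 1 - j) =
        Ring.choose (((m - j : ℕ) : ℤ) - 1 - (i - a - 1)) (m - j) := by
    intro j hj
    have hjm : j ≤ m := Nat.lt_succ_iff.mp (mem_range.mp hj)
    rw [← ibinom_natCast_eq_choose]
    push_cast [hjm]
    congr 1 <;> ring
  rw [sum_congr rfl fun j hj => by rw [hsummand j hj, ibinom_natCast_eq_choose],
    Ring.sum_range_neg_one_pow_mul_choose_mul_choose,
    show t - 1 + (i - a - 1) = t - 2 - a + i by ring, ← ibinom_natCast_eq_choose,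
    Nat.cast_add_one, add_sub_cancel_right, pow_add, pow_add]
  ring
end

section
/- Fix natural numbers m, n with 0 < m < n, and natural numbers t ≥ 1, and let a, b be integers with a ≥ 0 or b ≥ 0. Then ∑_{i=1}^{a} ∑_{j=1}^{b} (-1)^{n-i-j-1} · C(a-i+b-j, a-i) · C(t-1, m-i) · C(t-1, n-m-j) = ∑_{k=1}^{a-m+t} ∑_{l=1}^{b-n+m+t} (-1)^{k+l+1} · C((a-m+t)-k+(b-n+m+t)-l, (a-m+t)-k) · C(t-1, k-1) · C(t-1, l-1), where sums with empty ranges are 0. -/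
/-!
Only the indices `i > m - t`, `j > n - m - t` contribute to the left-hand side, because
`C(t-1, m-i)` vanishes for `m - i > t - 1`. Shifting `i = k + (m - t)`, `j = l + (n - m - t)`
matches the two sums term by term: the symmetry `C(t-1, t-k) = C(t-1, k-1)` turns the
corner binomials into each other, and the sign exponent changes by the even number `2(n - t)`.
-/

/-- Classical binomial coefficient for integer arguments: `0` when `k > n` or
when either argument is negative. -/
def C (n k : ℤ) : ℤ :=
  if 0 ≤ n ∧ 0 ≤ k then (n.toNat.choose k.toNat : ℤ) else 0

open Finset

lemma C_natCast (n k : ℕ) : C n k = n.choose k := by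
  simp [C]

lemma C_eq_zero_of_lt {n k : ℤ} (h : n < k) : C n k = 0 := by
  unfold C
  split_ifs with hnk
  · exact_mod_cast Nat.choose_eq_zero_of_lt (by omega)
  · rfl

lemma C_eq_zero_of_neg_right {n k : ℤ} (hk : k < 0) : C n k = 0 := by
  simp [C, hk.not_ge]

lemma C_symm (n k : ℤ) : C n (n - k) = C n k := by
  rcases lt_or_ge n k with hnk | hkn
  · rw [C_eq_zero_of_lt hnk, C_eq_zero_of_neg_right (by omega)]
  rcases lt_or_ge k 0 with hk | hk
  · rw [C_eq_zero_of_lt (by omega), C_eq_zero_of_neg_right hk]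
  lift k to ℕ using hk
  lift n to ℕ using (by omega)
  rw [← Nat.cast_sub (by omega), C_natCast, C_natCast, Nat.choose_symm (by omega)]

lemma sum_Icc_one_eq_sum_Icc_one_add {M : Type*} [AddCommMonoid M] (f : ℕ → M) (u a : ℕ)
    (hf : ∀ i ≤ u, f i = 0) : ∑ i ∈ Icc 1 a, f i = ∑ k ∈ Icc 1 (a - u), f (k + u) := by
  rw [show ∑ k ∈ Icc 1 (a - u), f (k + u) = ∑ i ∈ Icc (1 + u) (a - u + u), f i by
    rw [← map_add_right_Icc, sum_map]; rfl]
  refine (sum_subset (fun i hi => ?_) (fun i hi hi' => hf i ?_)).symm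
  · simp only [mem_Icc] at hi ⊢
    omega
  · simp only [mem_Icc] at hi hi'
    omega

theorem stmt10_general (m n t a b : ℕ) (hmn : m < n)
    (htm : t ≤ m) (htnm : t ≤ n - m) :
    (∑ i ∈ Finset.Icc 1 a, ∑ j ∈ Finset.Icc 1 b,
        (-1 : ℤ) ^ (n + i + j + 1) * C ((a : ℤ) - i + b - j) ((a : ℤ) - i) *
          C ((t : ℤ) - 1) ((m : ℤ) - i) * C ((t : ℤ) - 1) ((n : ℤ) - m - j)) =
      ∑ k ∈ Finset.Icc 1 (a + t - m), ∑ l ∈ Finset.Icc 1 (b + m + t - n),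
        (-1 : ℤ) ^ (k + l + 1) *
          C (((a : ℤ) - m + t) - k + ((b : ℤ) - n + m + t) - l) (((a : ℤ) - m + t) - k) *
          C ((t : ℤ) - 1) ((k : ℤ) - 1) * C ((t : ℤ) - 1) ((l : ℤ) - 1) := by
  have hu (i : ℕ) (hi : i ≤ m - t) : C ((t : ℤ) - 1) ((m : ℤ) - i) = 0 :=
    C_eq_zero_of_lt (by omega)
  have hv (j : ℕ) (hj : j ≤ n - m - t) : C ((t : ℤ) - 1) ((n : ℤ) - m - j) = 0 :=
    C_eq_zero_of_lt (by omega)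
  rw [sum_Icc_one_eq_sum_Icc_one_add _ (m - t) a
    fun i hi => sum_eq_zero fun j _ => by rw [hu i hi, mul_zero, zero_mul],
    show a - (m - t) = a + t - m by omega]
  refine sum_congr rfl fun k _ => ?_
  rw [sum_Icc_one_eq_sum_Icc_one_add _ (n - m - t) b fun j hj => by rw [hv j hj, mul_zero],
    show b - (n - m - t) = b + m + t - n by omega]
  refine sum_congr rfl fun l _ => ?_
  have hsign : (-1 : ℤ) ^ (n + (k + (m - t)) + (l + (n - m - t)) + 1) = (-1) ^ (k + l + 1) := by
    rw [show n + (k + (m - t)) + (l + (n - m - t)) + 1 = k + l + 1 + 2 * (n - t) by omega,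
      pow_add, pow_mul, neg_one_sq, one_pow, mul_one]
  push_cast [htm, htnm, hmn.le]
  rw [hsign, ← C_symm _ ((k : ℤ) - 1), ← C_symm _ ((l : ℤ) - 1)]
  ring_nf

theorem stmt10 (m n t a b : ℕ) (hm : 0 < m) (hmn : m < n) (ht : 1 ≤ t)
    (ha : a ≤ m) (hb : b ≤ n - m) (htm : t ≤ m) (htnm : t ≤ n - m) :
    (∑ i ∈ Finset.Icc 1 a, ∑ j ∈ Finset.Icc 1 b,
        (-1 : ℤ) ^ (n + i + j + 1) * C ((a : ℤ) - i + b - j) ((a : ℤ) - i) *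
          C ((t : ℤ) - 1) ((m : ℤ) - i) * C ((t : ℤ) - 1) ((n : ℤ) - m - j)) =
      ∑ k ∈ Finset.Icc 1 (a + t - m), ∑ l ∈ Finset.Icc 1 (b + m + t - n),
        (-1 : ℤ) ^ (k + l + 1) *
          C (((a : ℤ) - m + t) - k + ((b : ℤ) - n + m + t) - l) (((a : ℤ) - m + t) - k) *
          C ((t : ℤ) - 1) ((k : ℤ) - 1) * C ((t : ℤ) - 1) ((l : ℤ) - 1) :=
  stmt10_general m n t a b hmn htm htnm
end

section
/- For natural numbers t ≥ 1 and 0 ≤ a, b ≤ t: ∑_{i=1}^{a} ∑_{j=1}^{b} (-1)^{i+j} · C(a-i+b-j, a-i) · C(t-1, i-1) · C(t-1, j-1) · (-1)^{a+b} = ∑_{i=1}^{min(a,b)} C(t-1-i, a-i) · C(t-1-i, b-i); equivalently, the sign of the double sum ∑_{i=1}^{a} ∑_{j=1}^{b} (-1)^{i+j+1} C(a-i+b-j, a-i) C(t-1, i-1) C(t-1, j-1) is (-1)^{a+b+1} whenever the sum is nonzero. -/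
/-!
Put `m = t - 1`. Since `(-1) ^ (i + j) * C(i + j, i)` is the coefficient of `x ^ i * y ^ j` in
`(1 + x + y)⁻¹`, the left side is the coefficient of `x ^ a * y ^ b` in
`x * y * (1 + x) ^ m * (1 + y) ^ m / (1 + x + y)`. As a function `H a b` it therefore vanishes on
the axes and satisfies `H (a+1) (b+1) + H a (b+1) + H (a+1) b = C(m, a) * C(m, b)`.

The right side `G_m a b` vanishes on the axes as well, and peeling off its first term gives
`G_{m+1} (a+1) (b+1) = C(m, a) * C(m, b) + G_m a b`. As `(1 + x) * (1 + y) = (1 + x + y) + x * y`,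
this shift carries the recurrence for `G_m` to the one for `G_{m+1}`; so by induction on `m` the
right side satisfies the same recurrence for `a, b ≤ m`, which together with the boundary values
determines both sides for `a, b ≤ m + 1 = t`.
-/

open Finset

def trinomialInvCoeff (R : Type*) [CommRing R] (i j : ℕ) : R :=
  (-1) ^ (i + j) * (i + j).choose i

section Convolution

variable {R : Type*} [CommRing R]

@[simp] lemma trinomialInvCoeff_zero_zero : trinomialInvCoeff R 0 0 = 1 := by
  simp [trinomialInvCoeff]

lemma trinomialInvCoeff_zero_succ (j : ℕ) :
    trinomialInvCoeff R 0 (j + 1) = -trinomialInvCoeff R 0 j := by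
  simp [trinomialInvCoeff, pow_succ]

lemma trinomialInvCoeff_succ_zero (i : ℕ) :
    trinomialInvCoeff R (i + 1) 0 = -trinomialInvCoeff R i 0 := by
  simp [trinomialInvCoeff, pow_succ]

lemma trinomialInvCoeff_succ_succ (i j : ℕ) :
    trinomialInvCoeff R (i + 1) (j + 1) =
      -(trinomialInvCoeff R i (j + 1) + trinomialInvCoeff R (i + 1) j) := by
  have hij : i + 1 + (j + 1) = i + j + 1 + 1 := by ring
  rw [trinomialInvCoeff, trinomialInvCoeff, trinomialInvCoeff, hij, Nat.choose_succ_succ,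
    ← add_assoc, add_right_comm i 1 j]
  push_cast
  ring

/-- The coefficient of `x ^ a * y ^ b` in `u(x) * v(y) / (1 + x + y)`. -/
def trinomialInvConv (u v : ℕ → R) (a b : ℕ) : R :=
  ∑ p ∈ antidiagonal a, ∑ q ∈ antidiagonal b, trinomialInvCoeff R p.1 q.1 * u p.2 * v q.2

lemma trinomialInvConv_recurrence (u v : ℕ → R) (a b : ℕ) :
    trinomialInvConv u v (a + 1) (b + 1) + trinomialInvConv u v a (b + 1) +
      trinomialInvConv u v (a + 1) b = u (a + 1) * v (b + 1) := by
  simp only [trinomialInvConv, Nat.sum_antidiagonal_succ, trinomialInvCoeff_succ_succ,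
    trinomialInvCoeff_zero_succ, trinomialInvCoeff_succ_zero, trinomialInvCoeff_zero_zero,
    neg_mul, add_mul, neg_add, sum_add_distrib, sum_neg_distrib]
  ring

def mulX (u : ℕ → R) : ℕ → R
  | 0 => 0
  | k + 1 => u k

@[simp] lemma mulX_zero (u : ℕ → R) : mulX u 0 = 0 := rfl

@[simp] lemma mulX_succ (u : ℕ → R) (k : ℕ) : mulX u (k + 1) = u k := rfl

@[simp] lemma trinomialInvConv_mulX_zero_left (u v : ℕ → R) (b : ℕ) :
    trinomialInvConv (mulX u) v 0 b = 0 := by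
  simp [trinomialInvConv]

@[simp] lemma trinomialInvConv_mulX_zero_right (u v : ℕ → R) (a : ℕ) :
    trinomialInvConv u (mulX v) a 0 = 0 := by
  simp [trinomialInvConv]

lemma trinomialInvConv_mulX_succ_succ (u v : ℕ → R) (a b : ℕ) :
    trinomialInvConv (mulX u) (mulX v) (a + 1) (b + 1) = trinomialInvConv u v a b := by
  simp [trinomialInvConv, Nat.sum_antidiagonal_succ']

end Convolution

lemma sum_Icc_one_succ_eq_sum_antidiagonal {M : Type*} [AddCommMonoid M] (n : ℕ) (g : ℕ → M) :
    ∑ i ∈ Icc 1 (n + 1), g i = ∑ p ∈ antidiagonal n, g (p.2 + 1) := by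
  refine sum_nbij' (fun i ↦ (n + 1 - i, i - 1)) (fun p ↦ p.2 + 1) ?_ ?_ ?_ ?_ ?_ <;>
    intros <;> simp_all [Prod.ext_iff] <;> omega

lemma sum_Icc_one_eq_sum_range {M : Type*} [AddCommMonoid M] (n : ℕ) (g : ℕ → M) :
    ∑ i ∈ Icc 1 n, g i = ∑ k ∈ range n, g (k + 1) := by
  induction n with
  | zero => simp
  | succ n ih => rw [sum_Icc_succ_top (by omega), ih, sum_range_succ]

lemma sum_Icc_sum_Icc_choose_eq_trinomialInvConv (m a b : ℕ) :
    ∑ i ∈ Icc 1 a, ∑ j ∈ Icc 1 b,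
        (-1 : ℤ) ^ (i + j) * Nat.choose (a - i + (b - j)) (a - i) *
          Nat.choose m (i - 1) * Nat.choose m (j - 1) * (-1 : ℤ) ^ (a + b) =
      trinomialInvConv (mulX fun k ↦ (m.choose k : ℤ)) (mulX fun k ↦ (m.choose k : ℤ))
        a b := by
  rcases a with _ | a
  · simp
  rcases b with _ | b
  · simp
  rw [trinomialInvConv_mulX_succ_succ, trinomialInvConv, sum_Icc_one_succ_eq_sum_antidiagonal]
  refine sum_congr rfl fun p hp ↦ ?_
  rw [sum_Icc_one_succ_eq_sum_antidiagonal]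
  refine sum_congr rfl fun q hq ↦ ?_
  rw [HasAntidiagonal.mem_antidiagonal] at hp hq
  obtain rfl : a = p.1 + p.2 := hp.symm
  obtain rfl : b = q.1 + q.2 := hq.symm
  have hsign : (-1 : ℤ) ^ (p.2 + 1 + (q.2 + 1)) * (-1) ^ (p.1 + p.2 + 1 + (q.1 + q.2 + 1)) =
      (-1) ^ (p.1 + q.1) := by
    rw [← pow_add, show p.2 + 1 + (q.2 + 1) + (p.1 + p.2 + 1 + (q.1 + q.2 + 1)) =
      p.1 + q.1 + 2 * (p.2 + q.2 + 2) by ring, pow_add, pow_mul]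
    simp
  simp only [trinomialInvCoeff, Nat.add_sub_cancel, show p.1 + p.2 + 1 - (p.2 + 1) = p.1 by omega,
    show q.1 + q.2 + 1 - (q.2 + 1) = q.1 by omega, ← hsign]
  ring

def diagChooseSum (m a b : ℕ) : ℤ :=
  ∑ i ∈ Icc 1 (min a b), (Nat.choose (m - i) (a - i) * Nat.choose (m - i) (b - i) : ℤ)

lemma diagChooseSum_comm (m a b : ℕ) : diagChooseSum m a b = diagChooseSum m b a := by
  rw [diagChooseSum, diagChooseSum, min_comm]
  exact sum_congr rfl fun _ _ ↦ mul_comm _ _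

@[simp] lemma diagChooseSum_zero_left (m b : ℕ) : diagChooseSum m 0 b = 0 := by
  simp [diagChooseSum]

@[simp] lemma diagChooseSum_zero_right (m a : ℕ) : diagChooseSum m a 0 = 0 := by
  simp [diagChooseSum]

lemma diagChooseSum_one_succ (m b : ℕ) : diagChooseSum m 1 (b + 1) = (m - 1).choose b := by
  simp [diagChooseSum]

lemma diagChooseSum_succ_succ_succ (m a b : ℕ) :
    diagChooseSum (m + 1) (a + 1) (b + 1) = m.choose a * m.choose b + diagChooseSum m a b := by
  rw [diagChooseSum, diagChooseSum, Nat.succ_min_succ, sum_Icc_one_eq_sum_range,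
    sum_Icc_one_eq_sum_range, sum_range_succ', add_comm]
  simp

lemma diagChooseSum_recurrence_zero_left (m b : ℕ) (hb : b ≤ m) :
    diagChooseSum m 1 (b + 1) + diagChooseSum m 0 (b + 1) + diagChooseSum m 1 b =
      m.choose 0 * m.choose b := by
  rcases b with _ | b
  · simp [diagChooseSum_one_succ]
  obtain ⟨m, rfl⟩ : ∃ k, m = k + 1 := ⟨m - 1, by omega⟩
  simp only [diagChooseSum_one_succ, diagChooseSum_zero_left, Nat.choose_succ_succ,
    Nat.choose_zero_right]
  push_cast
  ring

lemma diagChooseSum_recurrence (m a b : ℕ) (ha : a ≤ m) (hb : b ≤ m) :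
    diagChooseSum m (a + 1) (b + 1) + diagChooseSum m a (b + 1) + diagChooseSum m (a + 1) b =
      m.choose a * m.choose b := by
  induction m generalizing a b with
  | zero =>
    obtain rfl : a = 0 := by omega
    exact diagChooseSum_recurrence_zero_left 0 b hb
  | succ m ih =>
    rcases a with _ | a
    · exact diagChooseSum_recurrence_zero_left _ b hb
    rcases b with _ | b
    · rw [diagChooseSum_comm, diagChooseSum_comm _ (a + 1), diagChooseSum_comm _ (a + 1 + 1),
        mul_comm]
      exact diagChooseSum_recurrence_zero_left _ (a + 1) ha
    rw [diagChooseSum_succ_succ_succ, diagChooseSum_succ_succ_succ, diagChooseSum_succ_succ_succ,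
      Nat.choose_succ_succ, Nat.choose_succ_succ]
    push_cast
    linear_combination ih a b (by omega) (by omega)

lemma eq_of_recurrence {M : Type*} [AddCommGroup M] {f g : ℕ → ℕ → M} (N : ℕ)
    (hleft : ∀ b, f 0 b = g 0 b) (hright : ∀ a, f a 0 = g a 0)
    (hrec : ∀ a b, a < N → b < N →
      f (a + 1) (b + 1) + f a (b + 1) + f (a + 1) b = g (a + 1) (b + 1) + g a (b + 1) + g (a + 1) b)
    (a b : ℕ) (ha : a ≤ N) (hb : b ≤ N) : f a b = g a b := by
  induction a generalizing b with
  | zero => exact hleft b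
  | succ a iha =>
    induction b with
    | zero => exact hright (a + 1)
    | succ b ihb =>
      have h := hrec a b (by omega) (by omega)
      rw [iha (b + 1) (by omega) hb, ihb (by omega)] at h
      exact add_right_cancel (add_right_cancel h)

theorem stmt19_general (t a b : ℕ) (ha : a ≤ t) (hb : b ≤ t) :
    (∑ i ∈ Finset.Icc 1 a, ∑ j ∈ Finset.Icc 1 b,
        (-1 : ℤ) ^ (i + j) * Nat.choose (a - i + (b - j)) (a - i) *
          Nat.choose (t - 1) (i - 1) * Nat.choose (t - 1) (j - 1) *
            (-1 : ℤ) ^ (a + b)) =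
      ∑ i ∈ Finset.Icc 1 (min a b),
        (Nat.choose (t - 1 - i) (a - i) * Nat.choose (t - 1 - i) (b - i) : ℤ) := by
  rw [sum_Icc_sum_Icc_choose_eq_trinomialInvConv]
  refine eq_of_recurrence (g := diagChooseSum (t - 1)) t (by simp) (by simp)
    (fun a b ha hb ↦ ?_) a b ha hb
  rw [trinomialInvConv_recurrence, diagChooseSum_recurrence _ _ _ (by omega) (by omega)]
  rfl

theorem stmt19 (t a b : ℕ) (ht : 1 ≤ t) (ha : a ≤ t) (hb : b ≤ t) :
    (∑ i ∈ Finset.Icc 1 a, ∑ j ∈ Finset.Icc 1 b,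
        (-1 : ℤ) ^ (i + j) * Nat.choose (a - i + (b - j)) (a - i) *
          Nat.choose (t - 1) (i - 1) * Nat.choose (t - 1) (j - 1) *
            (-1 : ℤ) ^ (a + b)) =
      ∑ i ∈ Finset.Icc 1 (min a b),
        (Nat.choose (t - 1 - i) (a - i) * Nat.choose (t - 1 - i) (b - i) : ℤ) :=
  stmt19_general t a b ha hb
end
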